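/- Jacobi's triple product identity: ∏_{n≥1}(1-q^n)(1+zq^{n-1/2})(1+z⁻¹q^{n-1/2}) = ∑_{m∈Z} z^m q^{m²/2}, as an identity of formal Laurent series in z with coefficients formal power series in q^{1/2}. -/

import Mathlib

/-!
Cauchy's `q`-binomial theorem `∏_{j<n} (1 + Q^j w) = ∑_k Q^{k(k-1)/2} [n, k]_Q w^k`, taken at
`Q = u²`, `n = 2N` and `w = z u^{1-2N}`, gives the finite identity
`∏_{i<N} (1 + z u^{2i+1}) (1 + z⁻¹ u^{2i+1}) = ∑_{|m| ≤ N} [2N, N+m]_{u²} z^m u^{m²}`.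
After multiplying by `(u²; u²)_N`, the coefficient of `z^m u^{m²}` is
`(Q;Q)_N (Q;Q)_{2N} / ((Q;Q)_{N+m} (Q;Q)_{N-m})`. Since `(Q;Q)_n` converges to a nonzero limit,
these coefficients tend to `1` and are bounded uniformly in `N` and `m`, so Tannery's theorem,
dominated by the theta series `∑ ‖z^m u^{m²}‖`, lets `N → ∞`.
-/

open Finset Filter Topology Real Asymptotics

lemma two_mul_choose_two_eq_sq_sub (k : ℕ) : (2 * k.choose 2 : ℤ) = k ^ 2 - k := by
  induction k with
  | zero => simp
  | succ k ih =>
    rw [Nat.choose_succ_succ', Nat.choose_one_right]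
    push_cast
    linear_combination ih

lemma sum_range_two_mul_add_one (N : ℕ) : ∑ i ∈ range N, (2 * i + 1) = N ^ 2 := by
  induction N with
  | zero => simp
  | succ N ih => rw [sum_range_succ, ih]; ring

section GaussBinom

variable {R : Type*} [CommRing R] (Q : R)

/-- `qPochhammer Q n` is `(Q; Q)ₙ`. -/
def qPochhammer (n : ℕ) : R := ∏ j ∈ range n, (1 - Q ^ (j + 1))

def gaussBinom : ℕ → ℕ → R
  | _, 0 => 1
  | 0, _ + 1 => 0
  | n + 1, k + 1 => Q ^ (k + 1) * gaussBinom n (k + 1) + gaussBinom n k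

@[simp] lemma qPochhammer_zero : qPochhammer Q 0 = 1 := by simp [qPochhammer]

lemma qPochhammer_succ (n : ℕ) : qPochhammer Q (n + 1) = qPochhammer Q n * (1 - Q ^ (n + 1)) :=
  prod_range_succ _ n

@[simp] lemma gaussBinom_zero_right (n : ℕ) : gaussBinom Q n 0 = 1 := by
  cases n <;> rfl

lemma gaussBinom_succ_succ (n k : ℕ) :
    gaussBinom Q (n + 1) (k + 1) = Q ^ (k + 1) * gaussBinom Q n (k + 1) + gaussBinom Q n k :=
  rfl

lemma gaussBinom_of_lt {n k : ℕ} (h : n < k) : gaussBinom Q n k = 0 := by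
  induction n generalizing k with
  | zero => obtain ⟨k, rfl⟩ := Nat.exists_eq_add_of_lt h; rfl
  | succ n ih =>
    obtain ⟨k, rfl⟩ := Nat.exists_eq_add_of_le' (Nat.one_le_of_lt h)
    rw [gaussBinom_succ_succ, ih (by omega), ih (by omega), mul_zero, add_zero]

@[simp] lemma gaussBinom_self (n : ℕ) : gaussBinom Q n n = 1 := by
  induction n with
  | zero => rfl
  | succ n ih =>
    rw [gaussBinom_succ_succ, gaussBinom_of_lt Q n.lt_succ_self, ih, mul_zero, zero_add]

lemma gaussBinom_mul_qPochhammer_mul_qPochhammer (m k : ℕ) :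
    gaussBinom Q (m + k) k * qPochhammer Q k * qPochhammer Q m = qPochhammer Q (m + k) := by
  induction k generalizing m with
  | zero => simp
  | succ k ihk =>
    induction m with
    | zero => simp
    | succ m ihm =>
      have h₁ : gaussBinom Q (m + k + 1) (k + 1) * qPochhammer Q (k + 1) * qPochhammer Q m =
          qPochhammer Q (m + k + 1) := ihm
      have h₂ : gaussBinom Q (m + k + 1) k * qPochhammer Q k * qPochhammer Q (m + 1) =
          qPochhammer Q (m + k + 1) := by simpa only [Nat.add_right_comm] using ihk (m + 1)
      rw [qPochhammer_succ] at h₁ h₂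
      rw [show m + 1 + (k + 1) = m + k + 1 + 1 by ring, gaussBinom_succ_succ,
        qPochhammer_succ Q (m + k + 1), qPochhammer_succ Q k, qPochhammer_succ Q m]
      linear_combination (Q ^ (k + 1) * (1 - Q ^ (m + 1))) * h₁ + (1 - Q ^ (k + 1)) * h₂

theorem prod_one_add_pow_mul_eq_sum_gaussBinom (n : ℕ) (w : R) :
    ∏ j ∈ range n, (1 + Q ^ j * w) =
      ∑ k ∈ range (n + 1), Q ^ k.choose 2 * gaussBinom Q n k * w ^ k := by
  induction n generalizing w with
  | zero => simp
  | succ n ih =>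
    set c : ℕ → R := fun k => Q ^ k.choose 2 * gaussBinom Q n k
    have hcoeff (k : ℕ) : Q ^ (k + 1).choose 2 * gaussBinom Q (n + 1) (k + 1) * w ^ (k + 1) =
        c (k + 1) * (Q * w) ^ (k + 1) + w * (c k * (Q * w) ^ k) := by
      simp only [c, Nat.choose_succ_succ', Nat.choose_one_right, gaussBinom_succ_succ]
      ring
    have htop : ∑ k ∈ range (n + 1), c (k + 1) * (Q * w) ^ (k + 1) + 1 =
        ∑ k ∈ range (n + 1), c k * (Q * w) ^ k := by
      have hc₀ : c 0 * (Q * w) ^ 0 = 1 := by simp [c]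
      rw [← hc₀, ← sum_range_succ' (fun k => c k * (Q * w) ^ k), sum_range_succ]
      simp [c, gaussBinom_of_lt Q n.lt_succ_self]
    -- peeling off the factor `j = 0` leaves the same product at `Q * w`
    calc ∏ j ∈ range (n + 1), (1 + Q ^ j * w)
        = (∏ j ∈ range n, (1 + Q ^ j * (Q * w))) * (1 + w) := by
          rw [prod_range_succ']
          simp only [pow_succ, mul_assoc, pow_zero, one_mul]
      _ = (∑ k ∈ range (n + 1), c k * (Q * w) ^ k) * (1 + w) := by rw [ih]
      _ = ∑ k ∈ range (n + 2), Q ^ k.choose 2 * gaussBinom Q (n + 1) k * w ^ k := by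
          rw [sum_range_succ' _ (n + 1)]
          simp only [hcoeff, sum_add_distrib, ← mul_sum, ← htop]
          simp only [Nat.choose_zero_succ, gaussBinom_zero_right, pow_zero, mul_one]
          ring

end GaussBinom

section Field

variable {K : Type*} [Field K] {Q z u : K}

lemma gaussBinom_eq_div {m k : ℕ} (hk : qPochhammer Q k ≠ 0) (hm : qPochhammer Q m ≠ 0) :
    gaussBinom Q (m + k) k = qPochhammer Q (m + k) / (qPochhammer Q k * qPochhammer Q m) := by
  rw [eq_div_iff (mul_ne_zero hk hm), ← mul_assoc, gaussBinom_mul_qPochhammer_mul_qPochhammer]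

lemma sq_pow_mul_zpow (hu : u ≠ 0) (a : ℕ) (b : ℤ) :
    (u ^ 2) ^ a * u ^ b = u ^ (2 * (a : ℤ) + b) := by
  rw [zpow_add₀ hu, ← pow_mul, ← zpow_natCast]
  push_cast
  rfl

theorem jacobi_triple_product_finite (hz : z ≠ 0) (hu : u ≠ 0) (N : ℕ) :
    ∏ i ∈ range N, ((1 + z * u ^ (2 * i + 1)) * (1 + z⁻¹ * u ^ (2 * i + 1))) =
      ∑ m ∈ Icc (-N : ℤ) N,
        gaussBinom (u ^ 2) (2 * N) (m + N).toNat * z ^ m * u ^ (m ^ 2) := by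
  set w := z * u ^ (1 - 2 * (N : ℤ))
  have hleft : ∏ j ∈ range N, (1 + (u ^ 2) ^ j * w) =
      z ^ N * (u ^ (N ^ 2))⁻¹ * ∏ i ∈ range N, (1 + z⁻¹ * u ^ (2 * i + 1)) := by
    rw [← prod_range_reflect]
    have hfactor : ∀ i ∈ range N, 1 + (u ^ 2) ^ (N - 1 - i) * w =
        z * (u ^ (2 * i + 1))⁻¹ * (1 + z⁻¹ * u ^ (2 * i + 1)) := by
      intro i hi
      have hi : i < N := mem_range.1 hi
      rw [mul_left_comm, sq_pow_mul_zpow hu,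
        show 2 * ((N - 1 - i : ℕ) : ℤ) + (1 - 2 * N) = -((2 * i + 1 : ℕ) : ℤ) by omega,
        zpow_neg, zpow_natCast]
      field_simp
      ring
    rw [prod_congr rfl hfactor, prod_mul_distrib, prod_mul_distrib, prod_const, card_range,
      prod_inv_distrib, prod_pow_eq_pow_sum, sum_range_two_mul_add_one]
  have hright : ∏ i ∈ range N, (1 + (u ^ 2) ^ (N + i) * w) =
      ∏ i ∈ range N, (1 + z * u ^ (2 * i + 1)) := by
    refine prod_congr rfl fun i _ => ?_
    rw [mul_left_comm, sq_pow_mul_zpow hu,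
      show 2 * ((N + i : ℕ) : ℤ) + (1 - 2 * N) = ((2 * i + 1 : ℕ) : ℤ) by omega,
      zpow_natCast]
  have hterm (k : ℕ) : (u ^ 2) ^ k.choose 2 * gaussBinom (u ^ 2) (N + N) k * w ^ k =
      z ^ N * (u ^ (N ^ 2))⁻¹ *
        (gaussBinom (u ^ 2) (N + N) k * z ^ ((k : ℤ) - N) * u ^ (((k : ℤ) - N) ^ 2)) := by
    have hz' : z ^ N * z ^ ((k : ℤ) - N) = z ^ k := by
      rw [← zpow_natCast, ← zpow_add₀ hz, add_sub_cancel, zpow_natCast]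
    have hu' : (u ^ 2) ^ k.choose 2 * (u ^ (1 - 2 * (N : ℤ))) ^ k =
        (u ^ (N ^ 2))⁻¹ * u ^ (((k : ℤ) - N) ^ 2) := by
      rw [← zpow_natCast _ k, ← zpow_mul, sq_pow_mul_zpow hu, ← zpow_natCast, ← zpow_neg,
        ← zpow_add₀ hu]
      congr 1
      push_cast
      linear_combination two_mul_choose_two_eq_sq_sub k
    rw [mul_pow]
    linear_combination (gaussBinom (u ^ 2) (N + N) k * z ^ k) * hu' -
      (gaussBinom (u ^ 2) (N + N) k * ((u ^ (N ^ 2))⁻¹ * u ^ (((k : ℤ) - N) ^ 2))) * hz'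
  have hbinom := prod_one_add_pow_mul_eq_sum_gaussBinom (u ^ 2) (N + N) w
  rw [prod_range_add, hleft, hright, sum_congr rfl fun k _ => hterm k, ← mul_sum,
    mul_assoc] at hbinom
  have hc : z ^ N * (u ^ (N ^ 2))⁻¹ ≠ 0 := by positivity
  rw [prod_mul_distrib, mul_comm, mul_left_cancel₀ hc hbinom, Int.Icc_eq_finset_map, sum_map,
    show ((N : ℤ) + 1 - -N).toNat = N + N + 1 by omega, two_mul]
  simp [sub_eq_neg_add]

end Field

section Complex

variable {Q z u : ℂ}

lemma one_sub_pow_succ_ne_zero (hQ : ‖Q‖ < 1) (j : ℕ) : 1 - Q ^ (j + 1) ≠ 0 := by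
  refine sub_ne_zero.2 fun h => ?_
  have : ‖Q ^ (j + 1)‖ < 1 := by
    rw [norm_pow]
    exact pow_lt_one₀ (norm_nonneg Q) hQ j.succ_ne_zero
  rw [← h, norm_one] at this
  exact this.false

lemma qPochhammer_ne_zero (hQ : ‖Q‖ < 1) (n : ℕ) : qPochhammer Q n ≠ 0 :=
  prod_ne_zero_iff.2 fun j _ => one_sub_pow_succ_ne_zero hQ j

lemma tendsto_qPochhammer (hQ : ‖Q‖ < 1) :
    Tendsto (qPochhammer Q) atTop (𝓝 (∏' j : ℕ, (1 - Q ^ (j + 1)))) :=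
  (ModularForm.multipliable_one_sub_pow hQ).hasProd.tendsto_prod_nat

lemma tprod_one_sub_pow_ne_zero (hQ : ‖Q‖ < 1) : ∏' j : ℕ, (1 - Q ^ (j + 1)) ≠ 0 := by
  refine tprod_one_add_ne_zero_of_summable (f := fun j => -Q ^ (j + 1))
    (fun j => by simpa [sub_eq_add_neg] using one_sub_pow_succ_ne_zero hQ j) ?_
  simpa [norm_pow] using
    (summable_nat_add_iff 1).2 (summable_geometric_of_lt_one (norm_nonneg Q) hQ)

lemma exists_norm_gaussBinom_le (hQ : ‖Q‖ < 1) :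
    ∃ C, ∀ n k, ‖gaussBinom Q n k‖ ≤ C := by
  obtain ⟨A, hA⟩ := isBigO_one_nat_atTop_iff.1 ((tendsto_qPochhammer hQ).isBigO_one ℝ)
  obtain ⟨B, hB⟩ := isBigO_one_nat_atTop_iff.1
    (((tendsto_qPochhammer hQ).inv₀ (tprod_one_sub_pow_ne_zero hQ)).isBigO_one ℝ)
  refine ⟨A * (B * B), fun n k => ?_⟩
  rcases lt_or_ge n k with h | h
  · rw [gaussBinom_of_lt Q h, norm_zero]
    exact mul_nonneg ((norm_nonneg _).trans (hA 0)) (mul_self_nonneg B)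
  · obtain ⟨m, rfl⟩ := Nat.exists_eq_add_of_le' h
    rw [gaussBinom_eq_div (qPochhammer_ne_zero hQ k) (qPochhammer_ne_zero hQ m), div_eq_mul_inv,
      mul_inv, norm_mul, norm_mul]
    exact mul_le_mul (hA _) (mul_le_mul (hB k) (hB m) (norm_nonneg _)
      ((norm_nonneg _).trans (hB k))) (by positivity) ((norm_nonneg _).trans (hA 0))

/-- The coefficient of `z^m u^{m²}` in the `N`-th partial product of the triple product, at
`Q = u²`. -/
noncomputable def partialJacobiCoeff (Q : ℂ) (N : ℕ) : ℤ → ℂ :=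
  (Icc (-N : ℤ) N : Set ℤ).indicator fun m =>
    qPochhammer Q N * gaussBinom Q (2 * N) (m + N).toNat

lemma tendsto_partialJacobiCoeff (hQ : ‖Q‖ < 1) (m : ℤ) :
    Tendsto (partialJacobiCoeff Q · m) atTop (𝓝 1) := by
  set P := ∏' j : ℕ, (1 - Q ^ (j + 1))
  have hP : P ≠ 0 := tprod_one_sub_pow_ne_zero hQ
  have hΦ : Tendsto (qPochhammer Q) atTop (𝓝 P) := tendsto_qPochhammer hQ
  have hlow : Tendsto (fun N : ℕ => (N - m).toNat) atTop atTop :=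
    tendsto_atTop_atTop.2 fun b => ⟨b + m.natAbs, fun N hN => by omega⟩
  have hhigh : Tendsto (fun N : ℕ => (m + N).toNat) atTop atTop :=
    tendsto_atTop_atTop.2 fun b => ⟨b + m.natAbs, fun N hN => by omega⟩
  have hdouble : Tendsto (fun N : ℕ => 2 * N) atTop atTop :=
    tendsto_atTop_atTop.2 fun b => ⟨b, fun N hN => by omega⟩
  have hlim : Tendsto (fun N => qPochhammer Q N * (qPochhammer Q (2 * N) /
      (qPochhammer Q (m + N).toNat * qPochhammer Q (N - m).toNat)))
      atTop (𝓝 (P * (P / (P * P)))) :=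
    hΦ.mul ((hΦ.comp hdouble).div ((hΦ.comp hhigh).mul (hΦ.comp hlow)) (mul_ne_zero hP hP))
  rw [show P * (P / (P * P)) = 1 by field_simp] at hlim
  refine hlim.congr' ?_
  filter_upwards [eventually_ge_atTop m.natAbs] with N hN
  have hsplit : 2 * N = (N - m).toNat + (m + N).toNat := by omega
  rw [partialJacobiCoeff, Set.indicator_of_mem (by simp only [coe_Icc, Set.mem_Icc]; omega),
    hsplit, gaussBinom_eq_div (qPochhammer_ne_zero hQ _) (qPochhammer_ne_zero hQ _)]

lemma exists_norm_partialJacobiCoeff_le (hQ : ‖Q‖ < 1) :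
    ∃ C, ∀ N m, ‖partialJacobiCoeff Q N m‖ ≤ C := by
  obtain ⟨A, hA⟩ := isBigO_one_nat_atTop_iff.1 ((tendsto_qPochhammer hQ).isBigO_one ℝ)
  obtain ⟨B, hB⟩ := exists_norm_gaussBinom_le hQ
  refine ⟨A * B, fun N m => (norm_indicator_le_norm_self _ _).trans ?_⟩
  rw [norm_mul]
  exact mul_le_mul (hA N) (hB _ _) (norm_nonneg _) ((norm_nonneg _).trans (hA 0))

lemma jacobiTheta₂_term_log (hz : z ≠ 0) (hu : u ≠ 0) (m : ℤ) :
    jacobiTheta₂_term m (Complex.log z / (2 * π * Complex.I))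
      (Complex.I * (-Complex.log u / π)) = z ^ m * u ^ (m ^ 2) := by
  have harg : 2 * π * Complex.I * m * (Complex.log z / (2 * π * Complex.I)) +
      π * Complex.I * m ^ 2 * (Complex.I * (-Complex.log u / π)) =
      m * Complex.log z + ((m ^ 2 : ℤ) : ℂ) * Complex.log u := by
    field_simp
    push_cast
    linear_combination (-(m : ℂ) ^ 2 * Complex.log u) * Complex.I_sq
  rw [jacobiTheta₂_term, harg, Complex.exp_add, Complex.exp_int_mul, Complex.exp_int_mul,
    Complex.exp_log hz, Complex.exp_log hu]

lemma summable_norm_zpow_mul_zpow_sq (hz : z ≠ 0) (hu₀ : u ≠ 0) (hu : ‖u‖ < 1) :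
    Summable fun m : ℤ => ‖z ^ m * u ^ (m ^ 2)‖ := by
  have hτ : 0 < (Complex.I * (-Complex.log u / π)).im := by
    rw [Complex.I_mul_im, Complex.div_ofReal_re, Complex.neg_re, Complex.log_re]
    exact div_pos (neg_pos.2 (Real.log_neg (norm_pos_iff.2 hu₀) hu)) pi_pos
  have hθ := (summable_jacobiTheta₂_term_iff (Complex.log z / (2 * π * Complex.I)) _).2 hτ
  exact (summable_norm_iff.2 hθ).congr fun m => by rw [jacobiTheta₂_term_log hz hu₀]

lemma multipliable_one_add_mul_pow_two_mul_add_one (c : ℂ) (hu : ‖u‖ < 1) :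
    Multipliable fun n : ℕ => 1 + c * u ^ (2 * n + 1) := by
  refine multipliable_one_add_of_summable ?_
  have hgeom := (summable_geometric_of_lt_one (by positivity)
    (pow_lt_one₀ (norm_nonneg u) hu two_ne_zero)).mul_left (‖c‖ * ‖u‖)
  refine hgeom.congr fun n => ?_
  rw [norm_mul, norm_pow, ← pow_mul, pow_succ]
  ring

lemma prod_range_eq_tsum_partialJacobiCoeff (hz : z ≠ 0) (hu : u ≠ 0) (N : ℕ) :
    ∏ n ∈ range N,
      (1 - u ^ (2 * (n + 1))) * (1 + z * u ^ (2 * n + 1)) * (1 + z⁻¹ * u ^ (2 * n + 1)) =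
    ∑' m : ℤ, partialJacobiCoeff (u ^ 2) N m * z ^ m * u ^ (m ^ 2) := by
  have hΦ : ∏ n ∈ range N, (1 - u ^ (2 * (n + 1))) = qPochhammer (u ^ 2) N := by
    simp only [qPochhammer, pow_mul]
  rw [tsum_eq_sum (s := Icc (-N : ℤ) N) fun m hm => by
      rw [partialJacobiCoeff, Set.indicator_of_notMem (by simpa using hm), zero_mul, zero_mul]]
  simp_rw [mul_assoc, prod_mul_distrib]
  rw [hΦ, ← prod_mul_distrib, jacobi_triple_product_finite hz hu, mul_sum]
  refine sum_congr rfl fun m hm => ?_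
  rw [partialJacobiCoeff, Set.indicator_of_mem (by simpa using hm)]
  ring

end Complex

/-- Jacobi's triple product identity
`∏_{n≥1}(1-qⁿ)(1+zq^{n-1/2})(1+z⁻¹q^{n-1/2}) = ∑_{m∈ℤ} z^m q^{m²/2}`,
stated with `u = q^{1/2}` (so `u^{2n-1} = q^{n-1/2}`, `u^{m²} = q^{m²/2}`) as an
identity of functions for `|u| < 1`, `z ≠ 0`. -/
theorem jacobi_triple_product (z u : ℂ) (hz : z ≠ 0) (hu : ‖u‖ < 1) :
    (∏' n : ℕ,
      (1 - u ^ (2 * (n + 1))) * (1 + z * u ^ (2 * n + 1)) *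
        (1 + z⁻¹ * u ^ (2 * n + 1))) =
    ∑' m : ℤ, z ^ m * u ^ (m ^ 2) := by
  rcases eq_or_ne u 0 with rfl | hu₀
  · rw [tsum_eq_single 0 fun m hm => by rw [zero_zpow _ (pow_ne_zero 2 hm), mul_zero]]
    simp
  have hQ : ‖u ^ 2‖ < 1 := by rw [norm_pow]; exact pow_lt_one₀ (norm_nonneg u) hu two_ne_zero
  have hmul : Multipliable fun n : ℕ =>
      (1 - u ^ (2 * (n + 1))) * (1 + z * u ^ (2 * n + 1)) * (1 + z⁻¹ * u ^ (2 * n + 1)) := by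
    refine (Multipliable.mul ?_ (multipliable_one_add_mul_pow_two_mul_add_one z hu)).mul
      (multipliable_one_add_mul_pow_two_mul_add_one z⁻¹ hu)
    simpa only [pow_mul] using ModularForm.multipliable_one_sub_pow hQ
  obtain ⟨C, hC⟩ := exists_norm_partialJacobiCoeff_le hQ
  refine tendsto_nhds_unique hmul.hasProd.tendsto_prod_nat ?_
  simp_rw [prod_range_eq_tsum_partialJacobiCoeff hz hu₀]
  refine tendsto_tsum_of_dominated_convergence
    ((summable_norm_zpow_mul_zpow_sq hz hu₀ hu).mul_left C) (fun m => ?_)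
    (.of_forall fun N m => ?_)
  · simpa [mul_assoc] using (tendsto_partialJacobiCoeff hQ m).mul_const (z ^ m * u ^ (m ^ 2))
  · rw [mul_assoc, norm_mul]
    exact mul_le_mul_of_nonneg_right (hC N m) (norm_nonneg _)
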